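/- For every n ≥ 1, the value of the zpread polynomial at 5 is Z_n(5) = (−1)^{n−1} · 5 · F_n², where F_n is the n-th Fibonacci number. Consequently, for every n ≥ 1 the Fibonacci number factors into primitive parts: F_n = ∏_{d ∣ n, d ≥ 2} |φ_d(5)|. -/

import Mathlib

open Polynomial

/-- The Lucas polynomials: `L 0 = 2`, `L 1 = X`, `L (n+2) = X * L (n+1) - L n`. -/
noncomputable def lucasPoly : ℕ → Polynomial ℤ
  | 0 => 2
  | 1 => X
  | n + 2 => X * lucasPoly (n + 1) - lucasPoly n

/-- The zpread polynomials `Z n = 2 - L n (2 - X)`. -/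
noncomputable def zpread (n : ℕ) : Polynomial ℤ := 2 - (lucasPoly n).comp (2 - X)
/-- `phiPoly n` : for `n ≥ 3`, the polynomial `∏_{0 < k < n/2, gcd(k,n)=1} (X - 4 sin²(kπ/n))` in `ℝ[X]`,
with `phiPoly 1 = X` and `phiPoly 2 = X - 4`. -/
noncomputable def phiPoly : ℕ → Polynomial ℝ
  | 1 => X
  | 2 => X - 4
  | n => ∏ k ∈ Finset.filter (fun k => 0 < k ∧ 2 * k < n ∧ Nat.gcd k n = 1) (Finset.range n),
      (X - C (4 * (Real.sin ((k : ℝ) * Real.pi / (n : ℝ)))^2))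

open Real Finset

lemma factor_pos (x : ℝ) : 0 < 5 - 4 * Real.sin x ^ 2 := by
  nlinarith [Real.sin_sq_le_one x]

lemma cassini : ∀ n : ℕ, ((Nat.fib (n+1) : ℤ))^2 - Nat.fib (n+1) * Nat.fib n - (Nat.fib n)^2 = (-1)^n := by
  intro n
  induction n with
  | zero => simp
  | succ n ih =>
    rw [Nat.fib_add_two]; push_cast; push_cast at ih; rw [pow_succ]
    linear_combination (-1) * ih

lemma cassiniR (n : ℕ) : ((Nat.fib (n+1) : ℝ))^2 - Nat.fib (n+1) * Nat.fib n - (Nat.fib n)^2 = (-1)^n := by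
  exact_mod_cast congrArg (fun z : ℤ => (z : ℝ)) (cassini n)

lemma luc_eval : ∀ n : ℕ, (lucasPoly n).eval (-3) = 2 + (-1)^n * 5 * (Nat.fib n : ℤ)^2
  | 0 => by simp [lucasPoly]
  | 1 => by simp [lucasPoly]
  | (n+2) => by
    rw [lucasPoly]
    simp only [eval_sub, eval_mul, eval_X]
    rw [luc_eval (n+1), luc_eval n]
    have h : ((Nat.fib (n+1) : ℤ))^2 - Nat.fib (n+1) * Nat.fib n - (Nat.fib n)^2 = (-1)^n :=
      cassini n
    rw [Nat.fib_add_two]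
    push_cast
    push_cast at h
    have e : ((-1:ℤ))^n * (-1)^n = 1 := by
      rw [← pow_add]; exact Even.neg_one_pow ⟨n, rfl⟩
    rw [pow_succ, pow_succ]
    linear_combination (10*(-1)^n) * h + 10 * e

noncomputable def gA : ℝ := (3 + Real.sqrt 5)/2
noncomputable def gB : ℝ := (3 - Real.sqrt 5)/2

lemma sqrt5_sq : Real.sqrt 5 ^ 2 = 5 := Real.sq_sqrt (by norm_num)

lemma gAB_mul : gA * gB = 1 := by
  unfold gA gB; linear_combination (-(1:ℝ)/4) * sqrt5_sq

lemma gAB_add : gA + gB = 3 := by unfold gA gB; ring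

lemma gA_sq : gA^2 = 3 * gA - 1 := by
  unfold gA; linear_combination ((1:ℝ)/4) * sqrt5_sq
lemma gB_sq : gB^2 = 3 * gB - 1 := by
  unfold gB; linear_combination ((1:ℝ)/4) * sqrt5_sq

lemma AB_pow : ∀ n : ℕ, gA^n + gB^n = 5 * (Nat.fib n : ℝ)^2 + 2*(-1)^n
  | 0 => by norm_num
  | 1 => by simp only [pow_one, Nat.fib_one, Nat.cast_one]; rw [gAB_add]; norm_num
  | (n+2) => by
    have h1 := AB_pow (n+1)
    have h0 := AB_pow n
    have c' := cassiniR n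
    have hA : gA^(n+2) = 3*gA^(n+1) - gA^n := by
      have h : gA^(n+2) = gA^n * gA^2 := by ring
      rw [h, gA_sq]; ring
    have hB : gB^(n+2) = 3*gB^(n+1) - gB^n := by
      have h : gB^(n+2) = gB^n * gB^2 := by ring
      rw [h, gB_sq]; ring
    rw [hA, hB, Nat.fib_add_two]
    push_cast
    rw [pow_succ, pow_succ]
    linear_combination 3*h1 - h0 + 10*c'

lemma prod_cos (m : ℕ) :
    ∏ k ∈ Finset.range (m+1), (3 + 2 * Real.cos (2*π*k/(m+1))) = 5 * (Nat.fib (m+1) : ℝ)^2 := by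
  set n := m + 1 with hn
  have hn0 : 0 < n := Nat.succ_pos m
  have hnC : (n : ℂ) ≠ 0 := by exact_mod_cast hn0.ne'
  set ζ : ℂ := Complex.exp (2*π*Complex.I/n) with hζ
  have hprim : IsPrimitiveRoot ζ n := Complex.isPrimitiveRoot_exp n hn0.ne'
  have key : ∀ a : ℂ, a^n - 1 = ∏ k ∈ Finset.range n, (a - ζ^k) := by
    intro a
    have h := X_pow_sub_C_eq_prod hprim hn0 (one_pow n)
    have h2 := congrArg (Polynomial.eval a) h
    simpa [Polynomial.eval_prod] using h2
  have hzk : ∀ k : ℕ, ζ^k = Complex.exp ((2*π*k/n : ℝ) * Complex.I) := by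
    intro k
    rw [hζ, ← Complex.exp_nat_mul]
    congr 1
    push_cast
    field_simp
  set A : ℂ := (gA : ℂ) with hA
  set B : ℂ := (gB : ℂ) with hB
  have hABm : A * B = 1 := by rw [hA, hB, ← Complex.ofReal_mul, gAB_mul]; norm_num
  have hABa : A + B = 3 := by rw [hA, hB, ← Complex.ofReal_add, gAB_add]; norm_num
  have step1 : ∀ k ∈ Finset.range n,
      ((3 + 2 * Real.cos (2*π*k/n) : ℝ) : ℂ) * ζ^k = (ζ^k + A) * (ζ^k + B) := by
    intro k _
    have hE := hzk k
    set θ : ℝ := 2*π*k/n with hθ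
    rw [Complex.ofReal_add, Complex.ofReal_mul, Complex.ofReal_cos, hE]
    set E := Complex.exp ((θ:ℂ)*Complex.I) with hEdef
    set E' := Complex.exp (-(θ:ℂ)*Complex.I) with hE'def
    have hEE : E * E' = 1 := by
      rw [hEdef, hE'def, ← Complex.exp_add]
      ring_nf
      exact Complex.exp_zero
    have hcos : 2 * Complex.cos (θ:ℂ) = E + E' := by
      rw [hEdef, hE'def]; exact Complex.two_cos _
    have h3 : ((3:ℝ):ℂ) = 3 := by norm_num
    have h2 : ((2:ℝ):ℂ) = 2 := by norm_num
    rw [h3, h2]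
    linear_combination E*hcos + hEE + (-E)*hABa + (-1)*hABm
  -- product over k of (zeta^k + a)
  have shiftprod : ∀ a : ℂ, ∏ k ∈ Finset.range n, (ζ^k + a) = (-1:ℂ)^n * ((-1)^n * a^n - 1) := by
    intro a
    have h := key (-a)
    have hc : ∀ k ∈ Finset.range n, ζ^k + a = (-1) * ((-a) - ζ^k) := by intros; ring
    rw [Finset.prod_congr rfl hc, Finset.prod_mul_distrib, Finset.prod_const, Finset.card_range,
      ← h]
    ring
  have hs2 : (∑ k ∈ Finset.range n, k) * 2 = n * m := by
    simpa [hn] using Finset.sum_range_id_mul_two n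
  have hzprod : ∏ k ∈ Finset.range n, ζ^k = (-1:ℂ)^m := by
    rw [Finset.prod_pow_eq_pow_sum]
    set s := ∑ k ∈ Finset.range n, k with hsdef
    rw [hζ, ← Complex.exp_nat_mul]
    have h2 : ((s:ℂ)) * 2 = (n:ℂ) * m := by exact_mod_cast hs2
    have harg : (s:ℂ) * (2*π*Complex.I/n) = (m:ℕ) * (π*Complex.I) := by
      field_simp
      linear_combination h2
    rw [harg, Complex.exp_nat_mul, Complex.exp_pi_mul_I]
  have hProd := Finset.prod_congr rfl step1
  rw [Finset.prod_mul_distrib, Finset.prod_mul_distrib, hzprod,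
    shiftprod A, shiftprod B, ← Complex.ofReal_prod] at hProd
  -- now hProd : ↑Q * (-1)^m = ((-1)^n * ((-1)^n A^n - 1)) * ((-1)^n * ((-1)^n B^n - 1))
  have e1 : ((-1:ℂ))^n * (-1)^n = 1 := by rw [← pow_add]; exact Even.neg_one_pow ⟨n, rfl⟩
  have hnm : ((-1:ℂ))^n = -(-1)^m := by rw [hn, pow_succ]; ring
  have hABn : A^n * B^n = 1 := by rw [← mul_pow, hABm, one_pow]
  have hsum : A^n + B^n = 5*(Nat.fib n:ℂ)^2 + 2*(-1)^n := by
    have h := AB_pow n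
    rw [hA, hB, ← Complex.ofReal_pow, ← Complex.ofReal_pow, ← Complex.ofReal_add, h]
    push_cast
    ring
  have h5 : ((∏ k ∈ Finset.range n, (3 + 2 * Real.cos (2*π*k/n)) : ℝ) : ℂ) * (-1)^m
      = (5*(Nat.fib n:ℂ)^2) * (-1)^m := by
    rw [hProd]
    linear_combination (A^n*B^n*(((-1:ℂ))^n*(-1)^n+1) - (A^n+B^n)*(-1)^n - 1) * e1
      + hABn + (-(-1:ℂ)^n) * hsum + (-(5*(Nat.fib n:ℂ)^2)) * hnm
  have h6 := mul_right_cancel₀ (pow_ne_zero m (by norm_num : (-1:ℂ) ≠ 0)) h5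
  exact_mod_cast h6

lemma prod_cos' (n : ℕ) (hn : 0 < n) :
    ∏ k ∈ Finset.range n, (3 + 2 * Real.cos (2*π*k/n)) = 5 * (Nat.fib n : ℝ)^2 := by
  obtain ⟨m, rfl⟩ : ∃ m, n = m + 1 := ⟨n - 1, by omega⟩
  push_cast
  exact prod_cos m

lemma sin_form (n k : ℕ) :
    3 + 2 * Real.cos (2*π*k/n) = 5 - 4 * Real.sin ((k:ℝ) * π / n)^2 := by
  have h : 2*π*(k:ℝ)/n = 2 * ((k:ℝ) * π / n) := by ring
  rw [h, Real.cos_two_mul, Real.sin_sq]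
  ring



lemma prod_sin (n : ℕ) (hn : 1 ≤ n) :
    ∏ k ∈ (Finset.range n).filter (fun k => 0 < k ∧ 2*k < n),
      (5 - 4 * Real.sin ((k:ℝ) * π / n)^2) = (Nat.fib n : ℝ) := by
  have hn0 : 0 < n := hn
  set g : ℕ → ℝ := fun k => 3 + 2 * Real.cos (2*π*k/n) with hg
  have hpc : ∏ k ∈ Finset.range n, g k = 5 * (Nat.fib n : ℝ)^2 := prod_cos' n hn0
  rw [Finset.range_eq_Ico, Finset.prod_eq_prod_Ico_succ_bot hn0 g] at hpc
  have h0 : g 0 = 5 := by simp [hg]; norm_num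
  rw [h0] at hpc
  have hIco' : ∏ k ∈ Finset.Ico 1 n, g k = (Nat.fib n : ℝ)^2 :=
    mul_left_cancel₀ (by norm_num) hpc
  set T := (Finset.Ico 1 n).filter (fun k => 2*k < n) with hT
  have hsplit : ∏ k ∈ Finset.Ico 1 n, g k
      = (∏ k ∈ T, g k) * ∏ k ∈ (Finset.Ico 1 n).filter (fun k => ¬ 2*k < n), g k :=
    (Finset.prod_filter_mul_prod_filter_not _ _ _).symm
  have hsplit2 : ∏ k ∈ (Finset.Ico 1 n).filter (fun k => ¬ 2*k < n), g k
      = (∏ k ∈ ((Finset.Ico 1 n).filter (fun k => ¬ 2*k < n)).filter (fun k => 2*k = n), g k)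
        * ∏ k ∈ ((Finset.Ico 1 n).filter (fun k => ¬ 2*k < n)).filter (fun k => ¬ 2*k = n), g k :=
    (Finset.prod_filter_mul_prod_filter_not _ _ _).symm
  have hmid : ∏ k ∈ ((Finset.Ico 1 n).filter (fun k => ¬ 2*k < n)).filter (fun k => 2*k = n), g k = 1 := by
    apply Finset.prod_eq_one
    intro k hk
    simp only [Finset.mem_filter, Finset.mem_Ico] at hk
    have h2k : (n:ℝ) = 2*k := by exact_mod_cast hk.2.symm
    have hkpos : (0:ℝ) < k := by exact_mod_cast hk.1.1.1
    have harg : 2*π*(k:ℝ)/n = π := by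
      rw [h2k]
      field_simp
    show 3 + 2 * Real.cos (2*π*(k:ℝ)/n) = 1
    rw [harg, Real.cos_pi]
    norm_num
  have hrefl : ∏ k ∈ ((Finset.Ico 1 n).filter (fun k => ¬ 2*k < n)).filter (fun k => ¬ 2*k = n), g k
      = ∏ k ∈ T, g k := by
    apply Finset.prod_nbij' (fun k => n - k) (fun k => n - k)
    · intro k hk
      simp only [hT, Finset.mem_filter, Finset.mem_Ico] at hk ⊢
      omega
    · intro k hk
      simp only [hT, Finset.mem_filter, Finset.mem_Ico] at hk ⊢
      omega
    · intro k hk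
      simp only [hT, Finset.mem_filter, Finset.mem_Ico] at hk
      omega
    · intro k hk
      simp only [hT, Finset.mem_filter, Finset.mem_Ico] at hk
      omega
    · intro k hk
      simp only [Finset.mem_filter, Finset.mem_Ico] at hk
      have hkn : k ≤ n := by omega
      have hnR : (n:ℝ) ≠ 0 := by
        have : (0:ℕ) < n := hn0
        positivity
      show 3 + 2 * Real.cos (2*π*(k:ℝ)/n) = 3 + 2 * Real.cos (2*π*((n - k : ℕ):ℝ)/n)
      rw [Nat.cast_sub hkn]
      have harg : 2*π*((n:ℝ)-k)/n = 2*π - 2*π*k/n := by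
        field_simp
      rw [harg, Real.cos_two_pi_sub]
  have hTS : T = (Finset.range n).filter (fun k => 0 < k ∧ 2*k < n) := by
    ext k
    simp only [hT, Finset.mem_filter, Finset.mem_Ico, Finset.mem_range]
    omega
  have hsq : (∏ k ∈ T, g k)^2 = (Nat.fib n : ℝ)^2 := by
    rw [← hIco', hsplit, hsplit2, hmid, hrefl]
    ring
  have hTpos : 0 < ∏ k ∈ T, g k := by
    apply Finset.prod_pos
    intro k _
    show 0 < 3 + 2 * Real.cos (2*π*(k:ℝ)/n)
    rw [sin_form n k]
    exact factor_pos _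
  have hfpos : (0:ℝ) < (Nat.fib n : ℝ) := by
    exact_mod_cast Nat.fib_pos.mpr hn0
  have hTF : ∏ k ∈ T, g k = (Nat.fib n : ℝ) := by
    have hfac : (∏ k ∈ T, g k - Nat.fib n) * (∏ k ∈ T, g k + Nat.fib n) = 0 := by
      linear_combination hsq
    rcases mul_eq_zero.mp hfac with h | h
    · linarith
    · linarith
  rw [← hTS, ← hTF]
  apply Finset.prod_congr rfl
  intro k _
  exact (sin_form n k).symm

lemma phiPoly_def3 (n : ℕ) (hn : 3 ≤ n) :
    phiPoly n = ∏ k ∈ Finset.filter (fun k => 0 < k ∧ 2 * k < n ∧ Nat.gcd k n = 1) (Finset.range n),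
      (X - C (4 * (Real.sin ((k : ℝ) * Real.pi / (n : ℝ)))^2)) := by
  match n, hn with
  | (n+3), _ => rfl


lemma phiPoly_eval5 (d : ℕ) (hd : 3 ≤ d) :
    (phiPoly d).eval 5
      = ∏ j ∈ Finset.filter (fun j => 0 < j ∧ 2 * j < d ∧ Nat.gcd j d = 1) (Finset.range d),
        (5 - 4 * Real.sin ((j : ℝ) * π / d)^2) := by
  rw [phiPoly_def3 d hd, Polynomial.eval_prod]
  apply Finset.prod_congr rfl
  intro j _
  simp [mul_pow]

lemma phiPoly_abs5 (d : ℕ) (hd : 3 ≤ d) :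
    |(phiPoly d).eval 5|
      = ∏ j ∈ Finset.filter (fun j => 0 < j ∧ 2 * j < d ∧ Nat.gcd j d = 1) (Finset.range d),
        (5 - 4 * Real.sin ((j : ℝ) * π / d)^2) := by
  rw [phiPoly_eval5 d hd]
  apply abs_of_pos
  exact Finset.prod_pos (fun j _ => factor_pos _)

lemma fiber_eq (n d : ℕ) (hn : 0 < n) (hdvd : d ∣ n) (h2 : 2 ≤ d) :
    |(phiPoly d).eval 5|
      = ∏ k ∈ ((Finset.range n).filter (fun k => 0 < k ∧ 2*k < n)).filter
            (fun k => n / Nat.gcd k n = d),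
          (5 - 4 * Real.sin ((k:ℝ) * π / n)^2) := by
  obtain ⟨m, rfl⟩ := hdvd
  have hm : 0 < m := by
    rcases Nat.eq_zero_or_pos m with h | h
    · rw [h, mul_zero] at hn; exact absurd hn (lt_irrefl 0)
    · exact h
  have hd0 : 0 < d := by omega
  have hdm : d * m / d = m := Nat.mul_div_cancel_left m hd0
  have hgcd_of_fib : ∀ k : ℕ, 0 < k → d * m / Nat.gcd k (d*m) = d → Nat.gcd k (d*m) = m := by
    intro k hk0 hfib
    have h1 : Nat.gcd k (d*m) ∣ (d*m) := Nat.gcd_dvd_right _ _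
    have h3 := Nat.div_div_self h1 hn.ne'
    rw [hfib, hdm] at h3
    exact h3.symm
  by_cases hd2 : d = 2
  · subst hd2
    have hphi : (phiPoly 2).eval 5 = 1 := by
      show (X - 4 : Polynomial ℝ).eval 5 = 1
      simp
      norm_num
    rw [hphi, abs_one, eq_comm]
    apply Finset.prod_eq_one
    intro k hk
    exfalso
    simp only [Finset.mem_filter, Finset.mem_range] at hk
    obtain ⟨⟨hkn, hk0, hk2⟩, hfib⟩ := hk
    have hg := hgcd_of_fib k hk0 hfib
    have hmk : m ∣ k := hg ▸ Nat.gcd_dvd_left k (2*m)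
    have := Nat.le_of_dvd hk0 hmk
    omega
  · have hd3 : 3 ≤ d := by omega
    rw [phiPoly_abs5 d hd3]
    have hmR : (m:ℝ) ≠ 0 := by positivity
    have hdR : (d:ℝ) ≠ 0 := by positivity
    apply Finset.prod_nbij' (fun j => j * m) (fun k => k / m)
    · intro j hj
      simp only [Finset.mem_filter, Finset.mem_range] at hj ⊢
      obtain ⟨hjd, hj0, hj2, hjg⟩ := hj
      have hgm : Nat.gcd (j*m) (d*m) = m := by
        rw [Nat.gcd_mul_right, hjg, one_mul]
      have hlt : 2*(j*m) < d*m := by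
        calc 2*(j*m) = (2*j)*m := by ring
        _ < d*m := Nat.mul_lt_mul_of_lt_of_le hj2 (le_refl m) hm
      refine ⟨⟨?_, ?_, hlt⟩, ?_⟩
      · omega
      · positivity
      · rw [hgm, Nat.mul_div_cancel d hm]
    · intro k hk
      simp only [Finset.mem_filter, Finset.mem_range] at hk ⊢
      obtain ⟨⟨hkn, hk0, hk2⟩, hfib⟩ := hk
      have hg := hgcd_of_fib k hk0 hfib
      have hmk : m ∣ k := hg ▸ Nat.gcd_dvd_left k (d*m)
      obtain ⟨j, rfl⟩ := hmk
      rw [Nat.mul_div_cancel_left j hm]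
      have hj0 : 0 < j := by
        rcases Nat.eq_zero_or_pos j with h | h
        · rw [h, mul_zero] at hk0; exact absurd hk0 (lt_irrefl 0)
        · exact h
      have hj2 : 2*j < d := by
        have : 2*(m*j) < d*m := hk2
        nlinarith
      have hjg : Nat.gcd j d = 1 := by
        rw [mul_comm m j, Nat.gcd_mul_right j m d] at hg
        exact Nat.eq_of_mul_eq_mul_right hm (hg.trans (one_mul m).symm)
      exact ⟨by omega, hj0, hj2, hjg⟩
    · intro j hj
      exact Nat.mul_div_cancel j hm
    · intro k hk
      simp only [Finset.mem_filter, Finset.mem_range] at hk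
      obtain ⟨⟨hkn, hk0, hk2⟩, hfib⟩ := hk
      have hg := hgcd_of_fib k hk0 hfib
      have hmk : m ∣ k := hg ▸ Nat.gcd_dvd_left k (d*m)
      exact Nat.div_mul_cancel hmk
    · intro j hj
      have harg : ((j:ℝ) * π / (d:ℝ)) = (((j*m : ℕ)):ℝ) * π / (((d*m : ℕ)):ℝ) := by
        push_cast
        field_simp
      rw [harg]

lemma divisor_prod (n : ℕ) (hn : 1 ≤ n) :
    ∏ d ∈ Finset.filter (fun d => 2 ≤ d) (Nat.divisors n), |(phiPoly d).eval 5|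
    = ∏ k ∈ (Finset.range n).filter (fun k => 0 < k ∧ 2*k < n),
        (5 - 4 * Real.sin ((k:ℝ) * π / n)^2) := by
  have hn0 : 0 < n := hn
  have hmap : ∀ k ∈ (Finset.range n).filter (fun k => 0 < k ∧ 2*k < n),
      n / Nat.gcd k n ∈ n.divisors := by
    intro k _
    rw [Nat.mem_divisors]
    exact ⟨Nat.div_dvd_of_dvd (Nat.gcd_dvd_right k n), hn0.ne'⟩
  have hfib := Finset.prod_fiberwise_of_maps_to hmap
    (fun k => 5 - 4*Real.sin ((k:ℝ)*π/n)^2)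
  rw [← hfib]
  have hsub : ∏ d ∈ Finset.filter (fun d => 2 ≤ d) (Nat.divisors n),
      (∏ k ∈ ((Finset.range n).filter (fun k => 0 < k ∧ 2*k < n)).filter
          (fun k => n / Nat.gcd k n = d), (5 - 4*Real.sin ((k:ℝ)*π/n)^2))
      = ∏ d ∈ Nat.divisors n,
      (∏ k ∈ ((Finset.range n).filter (fun k => 0 < k ∧ 2*k < n)).filter
          (fun k => n / Nat.gcd k n = d), (5 - 4*Real.sin ((k:ℝ)*π/n)^2)) := by
    apply Finset.prod_subset (Finset.filter_subset _ _)
    intro d hd hnd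
    simp only [Finset.mem_filter, hd, true_and, not_le] at hnd
    apply Finset.prod_eq_one
    intro k hk
    exfalso
    simp only [Finset.mem_filter, Finset.mem_range] at hk
    obtain ⟨⟨hkn, hk0, hk2⟩, hfibk⟩ := hk
    have hd1 : d = 1 := by
      have := Nat.pos_of_mem_divisors hd
      omega
    subst hd1
    have h1 : Nat.gcd k n ∣ n := Nat.gcd_dvd_right _ _
    have h3 := Nat.div_div_self h1 hn0.ne'
    rw [hfibk, Nat.div_one] at h3
    have : n ∣ k := h3 ▸ Nat.gcd_dvd_left k n
    have := Nat.le_of_dvd hk0 this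
    omega
  rw [← hsub]
  apply Finset.prod_congr rfl
  intro d hd
  simp only [Finset.mem_filter, Nat.mem_divisors] at hd
  exact fiber_eq n d hn0 hd.1.1 hd.2


/-- For `n ≥ 1`: `Z n (5) = (-1)^{n-1} · 5 · F_n²`, and consequently the Fibonacci number
factors into primitive parts: `F_n = ∏_{d ∣ n, d ≥ 2} |φ_d(5)|`. -/
theorem zpread_eval_five_fib (n : ℕ) (hn : 1 ≤ n) :
    (zpread n).eval 5 = (-1) ^ (n - 1) * 5 * (Nat.fib n : ℤ) ^ 2 ∧
    (Nat.fib n : ℝ) =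
      ∏ d ∈ Finset.filter (fun d => 2 ≤ d) (Nat.divisors n), |(phiPoly d).eval 5| := by
  constructor
  · have hev : (zpread n).eval 5 = 2 - (lucasPoly n).eval (-3) := by
      simp [zpread, Polynomial.eval_comp]
      try norm_num
    rw [hev, luc_eval n]
    obtain ⟨m, rfl⟩ : ∃ m, n = m + 1 := ⟨n - 1, by omega⟩
    simp only [Nat.add_sub_cancel]
    rw [pow_succ]
    ring
  · rw [divisor_prod n hn, prod_sin n hn]
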